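/- Suppose the confidence condition holds. Then optimistic value iteration is optimistic with respect to the true optimal values: for all t ∈ {1,…,H} and all (s,a) ∈ S × A, Q̂*_t(s,a) ≥ Q*_t(s,a), and V̂*_t(s) ≥ V*_t(s) for all t ∈ {1,…,H+1} and s ∈ S. -/

import Mathlib

/-!
Both `(Q*, V*)` and `(Q̂*, V̂*)` are finite-horizon value iterations, the optimistic one with
reward `R̂ + b` and kernel `P̂`, so the claim is a comparison principle proved by backward
induction on `t`. Since `0 ≤ R ≤ 1`, the true values satisfy `0 ≤ V*_t ≤ H + 1 - t ≤ H`, so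
replacing `P` by `P̂` in the backup of `V*_{t+1}` costs at most `H · ‖P̂ - P‖₁`, and replacing
`R` by `R̂` at most `|R̂ - R|`; the bonus `b` pays for both, and monotonicity of the `P̂`-backup
and of the maximum over actions propagates `V*_{t+1} ≤ V̂*_{t+1}` to level `t`.
-/

open Finset

lemma Nat.backward_induction_Icc {H : ℕ} {p : ℕ → Prop} (hend : p (H + 1))
    (hstep : ∀ t ∈ Icc 1 H, p (t + 1) → p t) : ∀ t ∈ Icc 1 (H + 1), p t := by
  intro t ht
  rw [mem_Icc] at ht
  refine Nat.decreasingInduction' (fun k hk htk hk1 => hstep k ?_ hk1) ht.2 hend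
  exact mem_Icc.mpr ⟨ht.1.trans htk, Nat.lt_succ_iff.mp hk⟩

section Sums

variable {S : Type*} [Fintype S]

lemma sum_mul_le_of_le {p V : S → ℝ} {c : ℝ} (hp0 : ∀ s, 0 ≤ p s) (hp1 : ∑ s, p s = 1)
    (hV : ∀ s, V s ≤ c) : ∑ s, p s * V s ≤ c :=
  calc ∑ s, p s * V s ≤ ∑ s, p s * c := by gcongr with s; exacts [hp0 s, hV s]
    _ = c := by rw [← sum_mul, hp1, one_mul]

lemma sum_sub_mul_le_mul_sum_abs_sub {p q V : S → ℝ} {M : ℝ} (hV : ∀ s, |V s| ≤ M) :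
    ∑ s, (p s - q s) * V s ≤ M * ∑ s, |q s - p s| := by
  rw [mul_sum]
  refine sum_le_sum fun s _ => ?_
  calc (p s - q s) * V s ≤ |q s - p s| * |V s| := by
        rw [abs_sub_comm, ← abs_mul]; exact le_abs_self _
    _ ≤ M * |q s - p s| := by rw [mul_comm]; gcongr; exact hV s

/-- One optimistic Bellman backup dominates the true one. -/
lemma add_sum_mul_le_add_sum_mul {p q V W : S → ℝ} {r r' M : ℝ} (hq : ∀ s, 0 ≤ q s)
    (hV : ∀ s, |V s| ≤ M) (hVW : ∀ s, V s ≤ W s) (hr : r + M * ∑ s, |q s - p s| ≤ r') :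
    r + ∑ s, p s * V s ≤ r' + ∑ s, q s * W s := by
  have hshift : ∑ s, p s * V s = ∑ s, q s * V s + ∑ s, (p s - q s) * V s := by
    rw [← sum_add_distrib]; congr 1; ext s; ring
  have hmono : ∑ s, q s * V s ≤ ∑ s, q s * W s := by
    gcongr with s; exacts [hq s, hVW s]
  linarith [sum_sub_mul_le_mul_sum_abs_sub (p := p) (q := q) hV]

end Sums

structure IsValueIteration {S A : Type*} [Fintype S] [Fintype A] [Nonempty A]
    (P : S → A → S → ℝ) (r : S → A → ℝ) (H : ℕ) (Q : ℕ → S → A → ℝ) (V : ℕ → S → ℝ) :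
    Prop where
  terminal : ∀ s, V (H + 1) s = 0
  bellman_Q : ∀ t ∈ Icc 1 H, ∀ s a, Q t s a = r s a + ∑ s', P s a s' * V (t + 1) s'
  bellman_V : ∀ t ∈ Icc 1 H, ∀ s, V t s = univ.sup' univ_nonempty (fun a => Q t s a)

namespace IsValueIteration

variable {S A : Type*} [Fintype S] [Fintype A] [Nonempty A] {P P' : S → A → S → ℝ}
  {r r' : S → A → ℝ} {H : ℕ} {Q Q' : ℕ → S → A → ℝ} {V V' : ℕ → S → ℝ}

lemma value_mem_Icc (hV : IsValueIteration P r H Q V) (hP0 : ∀ s a s', 0 ≤ P s a s')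
    (hP1 : ∀ s a, ∑ s', P s a s' = 1) (hr0 : ∀ s a, 0 ≤ r s a) (hr1 : ∀ s a, r s a ≤ 1) :
    ∀ t ∈ Icc 1 (H + 1), ∀ s, 0 ≤ V t s ∧ V t s ≤ H + 1 - t := by
  refine Nat.backward_induction_Icc (fun s => by simp [hV.terminal s]) fun t ht hnext s => ?_
  obtain ⟨a⟩ := ‹Nonempty A›
  rw [hV.bellman_V t ht s]
  constructor
  · refine le_sup'_of_le _ (mem_univ a) ?_
    rw [hV.bellman_Q t ht s a]
    have := sum_nonneg fun s' (_ : s' ∈ univ) => mul_nonneg (hP0 s a s') (hnext s').1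
    linarith [hr0 s a]
  · refine sup'_le _ _ fun a _ => ?_
    rw [hV.bellman_Q t ht s a]
    have := sum_mul_le_of_le (hP0 s a) (hP1 s a) fun s' => (hnext s').2
    push_cast at this
    linarith [hr1 s a]

lemma Q_le_of_value_succ_le (hV : IsValueIteration P r H Q V)
    (hV' : IsValueIteration P' r' H Q' V') (hP'0 : ∀ s a s', 0 ≤ P' s a s') {M : ℝ}
    (hr : ∀ s a, r s a + M * ∑ s', |P' s a s' - P s a s'| ≤ r' s a) {t : ℕ} (ht : t ∈ Icc 1 H)
    (hbound : ∀ s, |V (t + 1) s| ≤ M) (hnext : ∀ s, V (t + 1) s ≤ V' (t + 1) s) (s : S) (a : A) :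
    Q t s a ≤ Q' t s a := by
  rw [hV.bellman_Q t ht, hV'.bellman_Q t ht]
  exact add_sum_mul_le_add_sum_mul (hP'0 s a) hbound hnext (hr s a)

lemma value_le (hV : IsValueIteration P r H Q V) (hV' : IsValueIteration P' r' H Q' V')
    (hP'0 : ∀ s a s', 0 ≤ P' s a s') {M : ℝ}
    (hr : ∀ s a, r s a + M * ∑ s', |P' s a s' - P s a s'| ≤ r' s a)
    (hbound : ∀ t ∈ Icc 1 (H + 1), ∀ s, |V t s| ≤ M) :
    ∀ t ∈ Icc 1 (H + 1), ∀ s, V t s ≤ V' t s := by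
  refine Nat.backward_induction_Icc (fun s => by rw [hV.terminal, hV'.terminal])
    fun t ht hnext s => ?_
  have hbound' := hbound (t + 1) (by simp only [mem_Icc] at ht ⊢; omega)
  rw [hV.bellman_V t ht, hV'.bellman_V t ht]
  exact sup'_mono_fun fun a _ => hV.Q_le_of_value_succ_le hV' hP'0 hr ht hbound' hnext s a

end IsValueIteration

theorem optimistic_value_iteration_optimism_general
    {S A : Type*} [Fintype S] [Fintype A] [Nonempty A]
    (P : S → A → S → ℝ) (R : S → A → ℝ) (H : ℕ)
    (hP0 : ∀ s a s', 0 ≤ P s a s')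
    (hP1 : ∀ s a, ∑ s' : S, P s a s' = 1)
    (hR0 : ∀ s a, 0 ≤ R s a) (hR1 : ∀ s a, R s a ≤ 1)
    (Phat : S → A → S → ℝ)
    (hPhat0 : ∀ s a s', 0 ≤ Phat s a s')
    (Rhat : S → A → ℝ) (b : S → A → ℝ)
    (hconf : ∀ s a,
      |Rhat s a - R s a| + H * ∑ s' : S, |Phat s a s' - P s a s'| ≤ b s a)
    (Qstar : ℕ → S → A → ℝ) (Vstar : ℕ → S → ℝ)
    (hVstarEnd : ∀ s, Vstar (H + 1) s = 0)
    (hQstar : ∀ t ∈ Finset.Icc 1 H, ∀ s a,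
      Qstar t s a = R s a + ∑ s' : S, P s a s' * Vstar (t + 1) s')
    (hVstar : ∀ t ∈ Finset.Icc 1 H, ∀ s,
      Vstar t s = Finset.univ.sup' Finset.univ_nonempty (fun a => Qstar t s a))
    (Qhat : ℕ → S → A → ℝ) (Vhat : ℕ → S → ℝ)
    (hVhatEnd : ∀ s, Vhat (H + 1) s = 0)
    (hQhat : ∀ t ∈ Finset.Icc 1 H, ∀ s a,
      Qhat t s a = Rhat s a + b s a + ∑ s' : S, Phat s a s' * Vhat (t + 1) s')
    (hVhat : ∀ t ∈ Finset.Icc 1 H, ∀ s,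
      Vhat t s = Finset.univ.sup' Finset.univ_nonempty (fun a => Qhat t s a)) :
    (∀ t ∈ Finset.Icc 1 H, ∀ s a, Qhat t s a ≥ Qstar t s a) ∧
      (∀ t ∈ Finset.Icc 1 (H + 1), ∀ s, Vhat t s ≥ Vstar t s) := by
  have hstar : IsValueIteration P R H Qstar Vstar := ⟨hVstarEnd, hQstar, hVstar⟩
  have hhat : IsValueIteration Phat (fun s a => Rhat s a + b s a) H Qhat Vhat :=
    ⟨hVhatEnd, hQhat, hVhat⟩
  have hbound : ∀ t ∈ Icc 1 (H + 1), ∀ s, |Vstar t s| ≤ H := fun t ht s => by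
    obtain ⟨h0, hle⟩ := hstar.value_mem_Icc hP0 hP1 hR0 hR1 t ht s
    have : (1 : ℝ) ≤ t := by exact_mod_cast (mem_Icc.mp ht).1
    exact abs_le.mpr ⟨by linarith, by linarith⟩
  have hr : ∀ s a, R s a + H * ∑ s', |Phat s a s' - P s a s'| ≤ Rhat s a + b s a :=
    fun s a => by linarith [hconf s a, neg_abs_le (Rhat s a - R s a)]
  have hV := hstar.value_le hhat hPhat0 hr hbound
  refine ⟨fun t ht s a => ?_, hV⟩
  have ht' : t + 1 ∈ Icc 1 (H + 1) := by simp only [mem_Icc] at ht ⊢; omega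
  exact hstar.Q_le_of_value_succ_le hhat hPhat0 hr ht (hbound _ ht') (hV _ ht') s a

/-- Under the confidence condition, optimistic value iteration is optimistic with
respect to the true optimal values: `Q̂*_t(s,a) ≥ Q*_t(s,a)` for all `t ∈ {1,…,H}`
and `(s,a)`, and `V̂*_t(s) ≥ V*_t(s)` for all `t ∈ {1,…,H+1}` and `s`. -/
theorem optimistic_value_iteration_optimism
    {S A : Type*} [Fintype S] [Fintype A] [Nonempty A]
    (P : S → A → S → ℝ) (R : S → A → ℝ) (H : ℕ)
    (hP0 : ∀ s a s', 0 ≤ P s a s')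
    (hP1 : ∀ s a, ∑ s' : S, P s a s' = 1)
    (hR0 : ∀ s a, 0 ≤ R s a) (hR1 : ∀ s a, R s a ≤ 1)
    (Phat : S → A → S → ℝ)
    (hPhat0 : ∀ s a s', 0 ≤ Phat s a s')
    (hPhat1 : ∀ s a, ∑ s' : S, Phat s a s' = 1)
    (Rhat : S → A → ℝ) (b : S → A → ℝ)
    (hconf : ∀ s a,
      |Rhat s a - R s a| + H * ∑ s' : S, |Phat s a s' - P s a s'| ≤ b s a)
    (Qstar : ℕ → S → A → ℝ) (Vstar : ℕ → S → ℝ)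
    (hVstarEnd : ∀ s, Vstar (H + 1) s = 0)
    (hQstar : ∀ t ∈ Finset.Icc 1 H, ∀ s a,
      Qstar t s a = R s a + ∑ s' : S, P s a s' * Vstar (t + 1) s')
    (hVstar : ∀ t ∈ Finset.Icc 1 H, ∀ s,
      Vstar t s = Finset.univ.sup' Finset.univ_nonempty (fun a => Qstar t s a))
    (Qhat : ℕ → S → A → ℝ) (Vhat : ℕ → S → ℝ)
    (hVhatEnd : ∀ s, Vhat (H + 1) s = 0)
    (hQhat : ∀ t ∈ Finset.Icc 1 H, ∀ s a,
      Qhat t s a = Rhat s a + b s a + ∑ s' : S, Phat s a s' * Vhat (t + 1) s')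
    (hVhat : ∀ t ∈ Finset.Icc 1 H, ∀ s,
      Vhat t s = Finset.univ.sup' Finset.univ_nonempty (fun a => Qhat t s a)) :
    (∀ t ∈ Finset.Icc 1 H, ∀ s a, Qhat t s a ≥ Qstar t s a) ∧
      (∀ t ∈ Finset.Icc 1 (H + 1), ∀ s, Vhat t s ≥ Vstar t s) :=
  optimistic_value_iteration_optimism_general P R H hP0 hP1 hR0 hR1 Phat hPhat0 Rhat b hconf Qstar
    Vstar hVstarEnd hQstar hVstar Qhat Vhat hVhatEnd hQhat hVhat
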